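/- arXiv:1705.03745 — 2 statements merged into one kernel-verified Lean document; each statement's English description precedes it below -/
import Mathlib

section
/- Let n ∈ ℕ and l ≥ 1 be a positive integer, and let t_1, …, t_l be real numbers with 0 < t_j ≤ 1/exp^n(2) for each j. Then log^n(1/(t_1 t_2 ⋯ t_l)) ≤ (log^n(1/t_1)) (log^n(1/t_2)) ⋯ (log^n(1/t_l)), where log^n denotes the n-fold iterated logarithm. -/
lemma two_le_expn (n : ℕ) : (2:ℝ) ≤ Real.exp^[n] 2 := by
  induction n with
  | zero => simp
  | succ n ih =>
    rw [Function.iterate_succ_apply']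
    have := Real.add_one_le_exp (Real.exp^[n] 2)
    linarith

lemma expn_pos (n : ℕ) : (0:ℝ) < Real.exp^[n] 2 := lt_of_lt_of_le (by norm_num) (two_le_expn n)

lemma logn_mono (n : ℕ) {x y : ℝ} (hx : Real.exp^[n] 2 ≤ x) (hxy : x ≤ y) :
    Real.log^[n] x ≤ Real.log^[n] y := by
  induction n generalizing x y with
  | zero => simpa using hxy
  | succ n ih =>
    rw [Function.iterate_succ_apply'] at hx
    rw [Function.iterate_succ_apply, Function.iterate_succ_apply]
    have hx0 : 0 < x := lt_of_lt_of_le (Real.exp_pos _) hx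
    have h1 : Real.exp^[n] 2 ≤ Real.log x := (Real.le_log_iff_exp_le hx0).2 hx
    exact ih h1 (Real.log_le_log hx0 hxy)

lemma logn_expn (n : ℕ) : Real.log^[n] (Real.exp^[n] 2) = 2 := by
  induction n with
  | zero => rfl
  | succ n ih =>
    simp only [Function.iterate_succ_apply' Real.exp, Function.iterate_succ_apply Real.log,
      Real.log_exp, ih]

lemma two_le_logn (n : ℕ) {x : ℝ} (hx : Real.exp^[n] 2 ≤ x) : 2 ≤ Real.log^[n] x := by
  calc (2:ℝ) = Real.log^[n] (Real.exp^[n] 2) := (logn_expn n).symm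
  _ ≤ Real.log^[n] x := logn_mono n le_rfl hx

lemma logn_mul (n : ℕ) {x y : ℝ} (hx : Real.exp^[n] 2 ≤ x) (hy : Real.exp^[n] 2 ≤ y) :
    Real.log^[n] (x * y) ≤ Real.log^[n] x * Real.log^[n] y := by
  induction n generalizing x y with
  | zero => simp
  | succ n ih =>
    rw [Function.iterate_succ_apply'] at hx hy
    have hx0 : 0 < x := lt_of_lt_of_le (Real.exp_pos _) hx
    have hy0 : 0 < y := lt_of_lt_of_le (Real.exp_pos _) hy
    have ha : Real.exp^[n] 2 ≤ Real.log x := (Real.le_log_iff_exp_le hx0).2 hx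
    have hb : Real.exp^[n] 2 ≤ Real.log y := (Real.le_log_iff_exp_le hy0).2 hy
    have h2 : (2:ℝ) ≤ Real.exp^[n] 2 := two_le_expn n
    rw [Function.iterate_succ_apply, Function.iterate_succ_apply,
      Function.iterate_succ_apply, Real.log_mul hx0.ne' hy0.ne']
    have hsum : Real.log x + Real.log y ≤ Real.log x * Real.log y := by nlinarith
    calc Real.log^[n] (Real.log x + Real.log y)
        ≤ Real.log^[n] (Real.log x * Real.log y) :=
          logn_mono n (le_trans ha (by linarith)) hsum
      _ ≤ Real.log^[n] (Real.log x) * Real.log^[n] (Real.log y) := ih ha hb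

lemma logn_prod (n : ℕ) : ∀ (l : ℕ), 1 ≤ l → ∀ (u : Fin l → ℝ),
    (∀ j, Real.exp^[n] 2 ≤ u j) →
    Real.log^[n] (∏ j, u j) ≤ ∏ j, Real.log^[n] (u j) := by
  intro l
  induction l with
  | zero => omega
  | succ l ih =>
    intro _ u hu
    rcases Nat.eq_zero_or_pos l with rfl | hl
    · simp
    have hu' : ∀ j, Real.exp^[n] 2 ≤ (fun j : Fin l => u j.succ) j := fun j => hu j.succ
    have hone : (1:ℝ) ≤ ∏ j : Fin l, u j.succ := by
      calc (1:ℝ) = ∏ _j : Fin l, (1:ℝ) := by simp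
        _ ≤ ∏ j : Fin l, u j.succ := Finset.prod_le_prod (fun i _ => zero_le_one)
            (fun i _ => le_trans one_le_two (le_trans (two_le_expn n) (hu i.succ)))
    have hprod2 : Real.exp^[n] 2 ≤ ∏ j : Fin l, u j.succ := by
      have h0 : Real.exp^[n] 2 ≤ u (Fin.succ ⟨0, hl⟩) := hu _
      calc Real.exp^[n] 2 ≤ u (Fin.succ ⟨0, hl⟩) := h0
        _ ≤ ∏ j : Fin l, u j.succ := by
            have := Finset.prod_le_prod (s := Finset.univ)
              (f := fun j : Fin l => if j = ⟨0, hl⟩ then u (Fin.succ ⟨0, hl⟩) else 1)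
              (g := fun j : Fin l => u j.succ)
              (fun i _ => by
                by_cases h : i = ⟨0, hl⟩ <;> simp [h] <;>
                  exact le_trans (expn_pos n).le (hu _))
              (fun i _ => by
                by_cases h : i = ⟨0, hl⟩ <;> simp [h] <;>
                  exact le_trans one_le_two (le_trans (two_le_expn n) (hu _)))
            simpa using this
    rw [Fin.prod_univ_succ, Fin.prod_univ_succ]
    calc Real.log^[n] (u 0 * ∏ j : Fin l, u j.succ)
        ≤ Real.log^[n] (u 0) * Real.log^[n] (∏ j : Fin l, u j.succ) :=
          logn_mul n (hu 0) hprod2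
      _ ≤ Real.log^[n] (u 0) * ∏ j : Fin l, Real.log^[n] (u j.succ) := by
          have h0 : 0 ≤ Real.log^[n] (u 0) := le_trans (by norm_num) (two_le_logn n (hu 0))
          exact mul_le_mul_of_nonneg_left (ih hl _ hu') h0

/-- Subadditivity of the iterated logarithm: if `0 < t_j ≤ 1/exp^n(2)` for `j = 1,…,l`, then
`log^n(1/(t_1⋯t_l)) ≤ ∏_j log^n(1/t_j)`. -/
theorem stmt1 (n l : ℕ) (hl : 1 ≤ l) (t : Fin l → ℝ)
    (hpos : ∀ j, 0 < t j) (hle : ∀ j, t j ≤ 1 / Real.exp^[n] 2) :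
    Real.log^[n] (1 / ∏ j, t j) ≤ ∏ j, Real.log^[n] (1 / t j) := by
  have key : ∀ j, Real.exp^[n] 2 ≤ 1 / t j := by
    intro j
    rw [le_div_iff₀ (hpos j)]
    calc Real.exp^[n] 2 * t j ≤ Real.exp^[n] 2 * (1 / Real.exp^[n] 2) :=
          mul_le_mul_of_nonneg_left (hle j) (expn_pos n).le
      _ = 1 := mul_one_div_cancel (expn_pos n).ne'
  have := logn_prod n l hl (fun j => 1 / t j) key
  simp only [one_div] at this ⊢
  rwa [Finset.prod_inv_distrib] at this
end

section
/- Let ρ > 0, n ≥ 1, and q(r) = exp^n(r^ρ). Then the derivative of q(r)/q'(r) with respect to r tends to 0 as r → ∞. -/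
open Real Filter Finset

noncomputable def Pp (m : ℕ) (x : ℝ) : ℝ := ∏ k ∈ Finset.range m, Real.exp^[k+1] x
noncomputable def Ss (m : ℕ) (x : ℝ) : ℝ := ∑ k ∈ Finset.range m, Pp k x

lemma iterExp_succ_pos (k : ℕ) (x : ℝ) : 0 < Real.exp^[k+1] x := by
  rw [Function.iterate_succ_apply']; exact Real.exp_pos _

lemma self_le_iterExp (k : ℕ) (x : ℝ) : x ≤ Real.exp^[k] x := by
  induction k with
  | zero => simp
  | succ k ih =>
    rw [Function.iterate_succ_apply']
    exact ih.trans ((le_add_of_nonneg_right one_pos.le).trans (Real.add_one_le_exp _))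

lemma one_le_iterExp_succ (k : ℕ) {x : ℝ} (hx : 0 ≤ x) : 1 ≤ Real.exp^[k+1] x := by
  rw [Function.iterate_succ_apply]
  exact (Real.one_le_exp hx).trans (self_le_iterExp k _)

lemma Pp_pos (m : ℕ) (x : ℝ) : 0 < Pp m x :=
  Finset.prod_pos fun k _ => iterExp_succ_pos k x

lemma one_le_Pp (m : ℕ) {x : ℝ} (hx : 0 ≤ x) : 1 ≤ Pp m x := by
  rw [Pp]
  calc (1:ℝ) = ∏ _k ∈ Finset.range m, (1:ℝ) := (Finset.prod_const_one).symm
    _ ≤ ∏ k ∈ Finset.range m, Real.exp^[k+1] x :=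
      Finset.prod_le_prod (fun i _ => zero_le_one) (fun i _ => one_le_iterExp_succ i hx)

lemma Ss_nonneg (m : ℕ) (x : ℝ) : 0 ≤ Ss m x :=
  Finset.sum_nonneg fun k _ => (Pp_pos k x).le

lemma hasDerivAt_iterExp (n : ℕ) (x : ℝ) :
    HasDerivAt (Real.exp^[n]) (Pp n x) x := by
  induction n with
  | zero => simpa [Pp] using (hasDerivAt_id x)
  | succ n ih =>
    have h := ih.exp
    have he : Real.exp^[n+1] = fun y => Real.exp (Real.exp^[n] y) := by
      funext y; rw [Function.iterate_succ_apply']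
    rw [he]
    have : Pp (n+1) x = Real.exp (Real.exp^[n] x) * Pp n x := by
      rw [Pp, Finset.prod_range_succ, ← Pp, Function.iterate_succ_apply', mul_comm]
    rw [this]
    exact h

lemma hasDerivAt_Pp (m : ℕ) (x : ℝ) :
    HasDerivAt (Pp m) (Pp m x * Ss m x) x := by
  induction m with
  | zero =>
    have e : Pp 0 = fun _ => (1:ℝ) := by funext y; simp [Pp]
    rw [e]; simpa [Pp, Ss] using (hasDerivAt_const x (1:ℝ))
  | succ m ih =>
    have he : Pp (m+1) = fun y => Pp m y * Real.exp^[m+1] y := by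
      funext y; rw [Pp, Finset.prod_range_succ, ← Pp]
    rw [he]
    have h := ih.mul (hasDerivAt_iterExp (m+1) x)
    refine h.congr_deriv ?_
    simp only [Pp, Ss, Finset.prod_range_succ, Finset.sum_range_succ]
    ring

lemma Pp_mul_exp_le {k m : ℕ} (hk : k < m) {x : ℝ} (hx : 0 ≤ x) :
    Pp k x * Real.exp x ≤ Pp m x := by
  have hsplit : Pp k x * ∏ j ∈ Finset.Ico k m, Real.exp^[j+1] x = Pp m x := by
    rw [Pp, Pp, Finset.range_eq_Ico, Finset.range_eq_Ico]
    exact Finset.prod_Ico_consecutive (fun j => Real.exp^[j+1] x) (Nat.zero_le k) hk.le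
  have hmem : k ∈ Finset.Ico k m := Finset.mem_Ico.2 ⟨le_refl k, hk⟩
  have h1 : Real.exp x ≤ Real.exp^[k+1] x := by
    rw [Function.iterate_succ_apply]
    exact self_le_iterExp k _
  have h2 : Real.exp^[k+1] x ≤ ∏ j ∈ Finset.Ico k m, Real.exp^[j+1] x := by
    calc Real.exp^[k+1] x
        = ∏ j ∈ Finset.Ico k m, (if j = k then Real.exp^[k+1] x else 1) := by
          rw [Finset.prod_ite_eq' (Finset.Ico k m) k (fun _ => Real.exp^[k+1] x), if_pos hmem]
      _ ≤ ∏ j ∈ Finset.Ico k m, Real.exp^[j+1] x := by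
          refine Finset.prod_le_prod (fun j _ => ?_) (fun j _ => ?_)
          · split <;> [exact (iterExp_succ_pos k x).le; exact zero_le_one]
          · split
            · next h => subst h; exact le_refl _
            · exact one_le_iterExp_succ j hx
  calc Pp k x * Real.exp x ≤ Pp k x * ∏ j ∈ Finset.Ico k m, Real.exp^[j+1] x :=
        mul_le_mul_of_nonneg_left (h1.trans h2) (Pp_pos k x).le
    _ = Pp m x := hsplit

lemma Ss_le (m : ℕ) {x : ℝ} (hx : 0 ≤ x) :
    Ss m x ≤ m * (Pp m x * Real.exp (-x)) := by
  rw [Ss]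
  calc ∑ k ∈ Finset.range m, Pp k x ≤ ∑ _k ∈ Finset.range m, Pp m x * Real.exp (-x) := by
        refine Finset.sum_le_sum fun k hk => ?_
        have h := Pp_mul_exp_le (Finset.mem_range.1 hk) hx
        rw [Real.exp_neg, ← div_eq_mul_inv, le_div_iff₀ (Real.exp_pos x)]
        linarith
    _ = m * (Pp m x * Real.exp (-x)) := by
        rw [Finset.sum_const, Finset.card_range, nsmul_eq_mul]

/-- For `q(r) = exp^n(r^ρ)` with `ρ > 0`, `n ≥ 1`, the derivative of `q/q'` tends to `0`
as `r → ∞`. -/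
theorem stmt7 (ρ : ℝ) (hρ : 0 < ρ) (n : ℕ) (hn : 1 ≤ n)
    (q : ℝ → ℝ) (hq : ∀ r, q r = Real.exp^[n] (r ^ ρ)) :
    Filter.Tendsto (deriv (fun r => q r / deriv q r)) Filter.atTop (nhds 0) := by
  obtain ⟨m, rfl⟩ : ∃ m, n = m + 1 := ⟨n - 1, (Nat.succ_pred_eq_of_pos hn).symm⟩
  have hqf : q = fun r => Real.exp^[m+1] (r ^ ρ) := funext hq
  subst hqf
  set h : ℝ → ℝ := fun r => (Pp m (r ^ ρ) * (ρ * r ^ (ρ - 1)))⁻¹ with hh_def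
  set v : ℝ → ℝ := fun r =>
    -(Ss m (r ^ ρ) / Pp m (r ^ ρ) + (ρ - 1) / (ρ * r ^ ρ * Pp m (r ^ ρ))) with hv_def
  -- basic positivity facts for r > 0
  have key : ∀ r : ℝ, 0 < r →
      ((fun r => (fun r => Real.exp^[m+1] (r ^ ρ)) r /
        deriv (fun r => Real.exp^[m+1] (r ^ ρ)) r) r = h r ∧ HasDerivAt h (v r) r) := by
    intro r hr
    have hb : 0 < r ^ (ρ - 1) := Real.rpow_pos_of_pos hr _
    have hx : 0 < r ^ ρ := Real.rpow_pos_of_pos hr _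
    have hP : 0 < Pp m (r ^ ρ) := Pp_pos m _
    have hE : 0 < Real.exp^[m+1] (r ^ ρ) := iterExp_succ_pos m _
    have hrpow : HasDerivAt (fun s : ℝ => s ^ ρ) (ρ * r ^ (ρ - 1)) r :=
      Real.hasDerivAt_rpow_const (Or.inl hr.ne')
    have hq' : HasDerivAt (fun s : ℝ => Real.exp^[m+1] (s ^ ρ))
        (Pp (m+1) (r ^ ρ) * (ρ * r ^ (ρ - 1))) r :=
      (hasDerivAt_iterExp (m+1) (r ^ ρ)).comp (h := fun s : ℝ => s ^ ρ) r hrpow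
    constructor
    · show Real.exp^[m+1] (r ^ ρ) / deriv (fun s : ℝ => Real.exp^[m+1] (s ^ ρ)) r = h r
      rw [hq'.deriv]
      have hPsucc : Pp (m+1) (r ^ ρ) = Pp m (r ^ ρ) * Real.exp^[m+1] (r ^ ρ) := by
        rw [Pp, Finset.prod_range_succ, ← Pp]
      rw [hPsucc, hh_def]
      rw [show Pp m (r ^ ρ) * Real.exp^[m+1] (r ^ ρ) * (ρ * r ^ (ρ - 1))
          = Real.exp^[m+1] (r ^ ρ) * (Pp m (r ^ ρ) * (ρ * r ^ (ρ - 1))) from by ring]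
      exact div_mul_cancel_left₀ hE.ne' _
    · -- derivative of h
      have hg1 : HasDerivAt (fun s : ℝ => Pp m (s ^ ρ))
          ((Pp m (r ^ ρ) * Ss m (r ^ ρ)) * (ρ * r ^ (ρ - 1))) r :=
        (hasDerivAt_Pp m (r ^ ρ)).comp (h := fun s : ℝ => s ^ ρ) r hrpow
      have hg2 : HasDerivAt (fun s : ℝ => ρ * s ^ (ρ - 1))
          (ρ * ((ρ - 1) * r ^ (ρ - 1 - 1))) r :=
        (Real.hasDerivAt_rpow_const (Or.inl hr.ne')).const_mul ρ
      have hg : HasDerivAt (fun s : ℝ => Pp m (s ^ ρ) * (ρ * s ^ (ρ - 1)))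
          ((Pp m (r ^ ρ) * Ss m (r ^ ρ)) * (ρ * r ^ (ρ - 1)) * (ρ * r ^ (ρ - 1))
            + Pp m (r ^ ρ) * (ρ * ((ρ - 1) * r ^ (ρ - 1 - 1)))) r := hg1.mul hg2
      have hgne : Pp m (r ^ ρ) * (ρ * r ^ (ρ - 1)) ≠ 0 := by positivity
      have hinv := hg.inv hgne
      have hveq : -((Pp m (r ^ ρ) * Ss m (r ^ ρ)) * (ρ * r ^ (ρ - 1)) * (ρ * r ^ (ρ - 1))
            + Pp m (r ^ ρ) * (ρ * ((ρ - 1) * r ^ (ρ - 1 - 1))))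
            / (Pp m (r ^ ρ) * (ρ * r ^ (ρ - 1))) ^ 2 = v r := by
        have e1 : r ^ ρ = r ^ (ρ - 1) * r := by
          rw [← Real.rpow_add_one hr.ne' (ρ - 1)]; ring_nf
        have e2 : r ^ (ρ - 1 - 1) = r ^ (ρ - 1) / r := by
          rw [Real.rpow_sub hr, Real.rpow_one]
        have hA : Pp m (r ^ (ρ - 1) * r) ≠ 0 := by rw [← e1]; exact hP.ne'
        rw [hv_def]
        simp only [e1, e2]
        field_simp [hA, hr.ne', hρ.ne']
      exact hveq ▸ hinv
  -- the two functions have equal derivatives eventually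
  have hcongr : deriv (fun r => (fun r => Real.exp^[m+1] (r ^ ρ)) r /
        deriv (fun r => Real.exp^[m+1] (r ^ ρ)) r) =ᶠ[Filter.atTop] v := by
    filter_upwards [Filter.eventually_gt_atTop (0:ℝ)] with r hr
    have hde : deriv (fun r => (fun r => Real.exp^[m+1] (r ^ ρ)) r /
        deriv (fun r => Real.exp^[m+1] (r ^ ρ)) r) r = deriv h r := by
      apply Filter.EventuallyEq.deriv_eq
      filter_upwards [eventually_gt_nhds hr] with s hs
      exact (key s hs).1
    rw [hde, ((key r hr).2).deriv]
  rw [Filter.tendsto_congr' hcongr]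
  have hxlim : Filter.Tendsto (fun r : ℝ => r ^ ρ) Filter.atTop Filter.atTop :=
    tendsto_rpow_atTop hρ
  have hT1 : Filter.Tendsto (fun r : ℝ => Ss m (r ^ ρ) / Pp m (r ^ ρ))
      Filter.atTop (nhds 0) := by
    apply squeeze_zero' (g := fun r : ℝ => (m : ℝ) * Real.exp (-(r ^ ρ)))
    · filter_upwards [Filter.eventually_gt_atTop (0:ℝ)] with r hr
      exact div_nonneg (Ss_nonneg m _) (Pp_pos m _).le
    · filter_upwards [Filter.eventually_gt_atTop (0:ℝ)] with r hr
      have hx : (0:ℝ) ≤ r ^ ρ := (Real.rpow_pos_of_pos hr _).le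
      rw [div_le_iff₀ (Pp_pos m _)]
      calc Ss m (r ^ ρ) ≤ m * (Pp m (r ^ ρ) * Real.exp (-(r ^ ρ))) := Ss_le m hx
        _ = m * Real.exp (-(r ^ ρ)) * Pp m (r ^ ρ) := by ring
    · have := Real.tendsto_exp_atBot.comp (tendsto_neg_atTop_atBot.comp hxlim)
      simpa using this.const_mul (m : ℝ)
  have hT2 : Filter.Tendsto (fun r : ℝ => (ρ - 1) / (ρ * r ^ ρ * Pp m (r ^ ρ)))
      Filter.atTop (nhds 0) := by
    apply squeeze_zero_norm' (a := fun r : ℝ => |ρ - 1| * (ρ * r ^ ρ)⁻¹)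
    · filter_upwards [Filter.eventually_gt_atTop (0:ℝ)] with r hr
      have hx : (0:ℝ) < r ^ ρ := Real.rpow_pos_of_pos hr _
      have hP1 : (1:ℝ) ≤ Pp m (r ^ ρ) := one_le_Pp m hx.le
      rw [Real.norm_eq_abs, abs_div,
        abs_of_pos (by positivity : (0:ℝ) < ρ * r ^ ρ * Pp m (r ^ ρ)), ← div_eq_mul_inv]
      refine div_le_div_of_nonneg_left (abs_nonneg _) (by positivity) ?_
      nlinarith [mul_pos hρ hx]
    · have hden : Filter.Tendsto (fun r : ℝ => ρ * r ^ ρ) Filter.atTop Filter.atTop := by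
        simpa using hxlim.const_mul_atTop hρ
      simpa using hden.inv_tendsto_atTop.const_mul |ρ - 1|
  have := (hT1.add hT2).neg
  simpa [hv_def] using this
end
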